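/- For positive semidefinite Hermitian matrices A, B ∈ ℂ^{n×n}, det(I + A + B) ≤ det(I + A) · det(I + B). -/

import Mathlib

/-!
Put `T = √B`. The matrix determinant lemma gives
`det (1 + A + T * T) = det (1 + A) * det (1 + T * (1 + A)⁻¹ * T)`, and `(1 + A)⁻¹ ≤ 1` in the
Loewner order, so `1 + T * (1 + A)⁻¹ * T ≤ 1 + B`. The determinant is monotone on positive
definite matrices: conjugating `P ≤ Q` by `P^(-1/2)` gives `1 ≤ P^(-1/2) * Q * P^(-1/2)`, all of
whose eigenvalues are at least `1`.
-/

open scoped ComplexOrder MatrixOrder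

namespace Matrix

variable {𝕜 n : Type*} [RCLike 𝕜] [Fintype n] [DecidableEq n]

theorem one_le_det_of_one_le {M : Matrix n n 𝕜} (hM : 1 ≤ M) : 1 ≤ M.det := by
  have hHerm : M.IsHermitian := by simpa using (le_iff.mp hM).isHermitian.add isHermitian_one
  have hspec : ∀ x ∈ spectrum ℝ M, 1 ≤ x := by
    rw [← algebraMap_le_iff_le_spectrum hHerm.isSelfAdjoint]
    simpa using hM
  rw [hHerm.det_eq_prod_eigenvalues, ← RCLike.ofReal_prod, ← RCLike.ofReal_one,
    RCLike.ofReal_le_ofReal]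
  exact Finset.one_le_prod fun i _ ↦ hspec _ (hHerm.eigenvalues_mem_spectrum_real i)

theorem PosDef.det_le_det {P Q : Matrix n n 𝕜} (hP : P.PosDef) (hPQ : P ≤ Q) :
    P.det ≤ Q.det := by
  set S := CFC.sqrt P
  have hSS : S * S = P := CFC.sqrt_mul_sqrt_self P hP.posSemidef.nonneg
  have hS : IsUnit S.det := (isUnit_iff_isUnit_det S).mp hP.isStrictlyPositive.isUnit_cfcSqrt
  have hSinv : star S⁻¹ = S⁻¹ := by
    rw [star_eq_conjTranspose, conjTranspose_nonsing_inv, ← star_eq_conjTranspose,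
      (CFC.sqrt_nonneg P).isSelfAdjoint.star_eq]
  have hconj : 1 ≤ S⁻¹ * Q * S⁻¹ := by
    have := star_left_conjugate_le_conjugate hPQ S⁻¹
    rwa [hSinv, ← hSS, mul_assoc, mul_assoc, mul_nonsing_inv _ hS, mul_one,
      nonsing_inv_mul _ hS] at this
  have hdet : P.det * (S⁻¹ * Q * S⁻¹).det = Q.det := by
    rw [← hSS, det_mul, det_mul, det_mul, det_nonsing_inv, Ring.inverse_eq_inv']
    field_simp [hS.ne_zero]
  calc P.det ≤ P.det * (S⁻¹ * Q * S⁻¹).det :=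
        le_mul_of_one_le_right hP.det_pos.le (one_le_det_of_one_le hconj)
    _ = Q.det := hdet

end Matrix

open Matrix in
/-- for PSD Hermitian `A, B : ℂ^{n×n}`,
`det(I + A + B) ≤ det(I + A) · det(I + B)`. -/
theorem det_one_add_add_le {n : ℕ} (A B : Matrix (Fin n) (Fin n) ℂ)
    (hA : A.PosSemidef) (hB : B.PosSemidef) :
    (1 + A + B).det ≤ (1 + A).det * (1 + B).det := by
  set T := CFC.sqrt B
  have hT : star T = T := (CFC.sqrt_nonneg B).isSelfAdjoint
  have hTT : T * T = B := CFC.sqrt_mul_sqrt_self B hB.nonneg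
  have h1A : (1 + A).PosDef := PosDef.one.add_posSemidef hA
  have hdet : (1 + A + B).det = (1 + A).det * (1 + T * (1 + A)⁻¹ * T).det := by
    rw [← hTT, det_add_mul T T h1A.det_pos.ne'.isUnit]
  -- With the L2 operator norm, complex matrices form a C⋆-algebra, where inversion is antitone.
  have hinv : (1 + A)⁻¹ ≤ 1 := by
    open scoped Matrix.Norms.L2Operator in
    simpa [nonsing_inv_eq_ringInverse] using
      CStarAlgebra.antitoneOn_ringInverse (A := Matrix (Fin n) (Fin n) ℂ)
        (by simp) h1A.isStrictlyPositive (le_add_of_nonneg_right hA.nonneg)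
  have hle : 1 + T * (1 + A)⁻¹ * T ≤ 1 + B := by
    have := star_left_conjugate_le_conjugate hinv T
    rw [hT, mul_one, hTT] at this
    gcongr
  have hpd : (1 + T * (1 + A)⁻¹ * T).PosDef := by
    refine PosDef.one.add_posSemidef ?_
    have := h1A.inv.posSemidef.conjTranspose_mul_mul_same T
    rwa [← star_eq_conjTranspose, hT] at this
  rw [hdet]
  exact mul_le_mul_of_nonneg_left (hpd.det_le_det hle) h1A.det_pos.le
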